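/- arXiv:1809.02292 — 2 statements merged into one kernel-verified Lean document; each statement's English description precedes it below -/
import Mathlib

section
/- Let (a_t)_{t≥1} and (b_t)_{t≥1} be sequences of nonnegative real numbers such that ∑_{t=1}^∞ a_t = +∞ and ∑_{t=1}^∞ a_t·b_t < +∞. If in addition there exists a constant K > 0 such that |b_{t+1} − b_t| ≤ K·a_t for all t, then lim_{t→∞} b_t = 0. -/
/-!
If `b` stayed above `ε` from some point on, `∑ a_t ≤ ε⁻¹ ∑ a_t b_t` would converge; so `b` dips
below every `ε > 0` infinitely often. Once the tail of `∑ a_t b_t` is below `ε² / K`, any excursion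
of `b` above `ε` starting at `u` and ending at the first later `v` with `b v < ε` has
`ε ∑_{u ≤ t < v} a_t < ε² / K`, so the increment bound gives `b u < b v + ε < 2ε`.
-/

open Filter Finset

section

variable {a b : ℕ → ℝ}

theorem frequently_lt_of_summable_mul (ha : ∀ t, 0 ≤ a t) (ha_div : ¬ Summable a)
    (hab : Summable fun t => a t * b t) {ε : ℝ} (hε : 0 < ε) : ∃ᶠ t in atTop, b t < ε := by
  refine fun hge => ha_div <| (hab.mul_left ε⁻¹).of_norm_bounded_eventually ?_
  rw [Nat.cofinite_eq_atTop]
  filter_upwards [hge] with t ht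
  rw [not_lt] at ht
  rw [Real.norm_of_nonneg (ha t), le_inv_mul_iff₀ hε]
  nlinarith [ha t]

theorem Summable.eventually_sum_Ico_lt {f : ℕ → ℝ} (hf : Summable f) {δ : ℝ} (hδ : 0 < δ) :
    ∀ᶠ u in atTop, ∀ v, ∑ t ∈ Ico u v, f t < δ := by
  obtain ⟨s, hs⟩ := summable_iff_vanishing_norm.1 hf δ hδ
  obtain ⟨N, hN⟩ := exists_nat_subset_range s
  filter_upwards [eventually_ge_atTop N] with u hu v
  refine (le_abs_self _).trans_lt (hs _ (disjoint_of_subset_right hN ?_))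
  exact disjoint_left.2 fun t ht ht' => by simp only [mem_Ico, mem_range] at ht ht'; omega

theorem exists_ge_lt_forall_Ico_le {u : ℕ} {ε : ℝ} (h : ∃ v ≥ u, b v < ε) :
    ∃ v ≥ u, b v < ε ∧ ∀ t ∈ Ico u v, ε ≤ b t := by
  classical
  obtain ⟨huv, hbv⟩ := Nat.find_spec h
  refine ⟨Nat.find h, huv, hbv, fun t ht => ?_⟩
  rw [mem_Ico] at ht
  exact not_lt.1 fun hbt => Nat.find_min h ht.2 ⟨ht.1, hbt⟩

theorem dist_le_mul_sum_Ico {K : ℝ} (hdiff : ∀ t, |b (t + 1) - b t| ≤ K * a t) {u v : ℕ}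
    (huv : u ≤ v) : dist (b u) (b v) ≤ K * ∑ t ∈ Ico u v, a t := by
  rw [mul_sum]
  refine (dist_le_Ico_sum_dist b huv).trans (sum_le_sum fun t _ => ?_)
  rw [dist_comm, Real.dist_eq]
  exact hdiff t

theorem eventually_lt_two_mul (ha : ∀ t, 0 ≤ a t) (ha_div : ¬ Summable a)
    (hab : Summable fun t => a t * b t) {K : ℝ} (hK : 0 < K)
    (hdiff : ∀ t, |b (t + 1) - b t| ≤ K * a t) {ε : ℝ} (hε : 0 < ε) :
    ∀ᶠ u in atTop, b u < 2 * ε := by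
  filter_upwards [hab.eventually_sum_Ico_lt (δ := ε ^ 2 / K) (by positivity)] with u hu
  obtain ⟨v, huv, hbv, hge⟩ := exists_ge_lt_forall_Ico_le
    ((frequently_lt_of_summable_mul ha ha_div hab hε).forall_exists_of_atTop u)
  have hmass : ε * ∑ t ∈ Ico u v, a t < ε ^ 2 / K := by
    refine lt_of_le_of_lt ?_ (hu v)
    rw [mul_sum]
    exact sum_le_sum fun t ht => by nlinarith [ha t, hge t ht]
  have hjump : K * ∑ t ∈ Ico u v, a t < ε := by
    rw [lt_div_iff₀ hK] at hmass
    nlinarith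
  have hdrop : b u - b v ≤ K * ∑ t ∈ Ico u v, a t :=
    (le_abs_self _).trans ((Real.dist_eq _ _).symm.trans_le (dist_le_mul_sum_Ico hdiff huv))
  linarith

end

/-- If `(a_t)` and `(b_t)` are nonnegative real sequences with
`∑ a_t = +∞` and `∑ a_t b_t < +∞`, and moreover there is a constant `K > 0` with
`|b_{t+1} - b_t| ≤ K · a_t` for all `t`, then `b_t → 0`. -/
theorem tendsto_zero_of_divergent_weights (a b : ℕ → ℝ)
    (ha_nonneg : ∀ t, 0 ≤ a t) (hb_nonneg : ∀ t, 0 ≤ b t)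
    (ha_div : Tendsto (fun n => ∑ t ∈ Finset.range n, a t) atTop atTop)
    (hab_sum : Summable (fun t => a t * b t))
    (K : ℝ) (hK : 0 < K) (hdiff : ∀ t, |b (t + 1) - b t| ≤ K * a t) :
    Tendsto b atTop (nhds 0) := by
  have ha_not : ¬ Summable a := (not_summable_iff_tendsto_nat_atTop_of_nonneg ha_nonneg).2 ha_div
  refine tendsto_order.2 ⟨fun ε hε => Eventually.of_forall fun t => hε.trans_le (hb_nonneg t),
    fun ε hε => ?_⟩
  simpa [mul_div_cancel₀] using
    eventually_lt_two_mul ha_nonneg ha_not hab_sum hK hdiff (half_pos hε)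
end

section
/- (Control of the full θ-partial gradient by the shifted block gradient.) In the stochastic block coordinate ascent setting, for every t ≥ 1, E[‖∇_θ f̂(θ_t, y_t)‖] ≤ L·β_t^max·√(M_ρ² + σ²) + E[‖g_t^θ‖], where ∇_θ f̂(θ_t, y_t) denotes the θ-partial gradient of f̂ evaluated at the current iterate x_t = (θ_t, y_t). -/
open MeasureTheory Filter

noncomputable section

/-- The stochastic block coordinate ascent setting of the paper
"Mean-Variance Proximal Policy Gradient".

`H` is a real finite-dimensional inner product space; `f : H → ℝ → ℝ` is the
(curried) objective `f̂(θ, y)`, differentiable as a function on `H × ℝ`, bounded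
above with supremum `fStar`, and with `L`-Lipschitz gradient (stated blockwise,
which for the Euclidean (ℓ²) structure on `H × ℝ` is exactly
`‖∇f̂(x) − ∇f̂(x')‖ ≤ L‖x − x'‖`).

On the probability space `(Ω, μ)` with filtration `F`, the iterates
`x_t = (θ t, y t)` are generated by the cyclic updates
`y_{t+1} = y_t + βy_t · g̃y_t`, `θ_{t+1} = θ_t + βθ_t • g̃θ_t`, with deterministic
initial point `x1`; the exact block gradients are
`g^y_t = ∂_y f̂(θ_t, y_t)` and `g^θ_t = ∇_θ f̂(θ_t, y_{t+1})`, with estimation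
errors `Δ^y_t = g̃^y_t − g^y_t`, `Δ^θ_t = g̃^θ_t − g^θ_t`.

Assumption (A1): `E[‖x_t‖²] ≤ ρ²`; assumption (A2): `E[(Δ^y_t)²] ≤ σ²`,
`E[‖Δ^θ_t‖²] ≤ σ²`, `E[Δ^y_t | F_{t-1}] = 0` a.s. and
`‖E[Δ^θ_t | F_{t-1}]‖ ≤ A·β_t^max` a.s.  The various integrability fields record
that the expectations appearing in the theorems are well defined (finite). -/
structure BCA (H : Type) [NormedAddCommGroup H] [InnerProductSpace ℝ H]
    [FiniteDimensional ℝ H] (Ω : Type) [MeasurableSpace Ω] where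
  /-- the underlying probability measure -/
  μ : Measure Ω
  prob : IsProbabilityMeasure μ
  /-- the filtration `(F_t)_{t ≥ 0}` -/
  F : ℕ → MeasurableSpace Ω
  F_le : ∀ t, F t ≤ ‹MeasurableSpace Ω›
  F_mono : Monotone F
  /-- the objective function `f̂`, written curried: `f θ y = f̂(θ, y)` -/
  f : H → ℝ → ℝ
  /-- the supremum `f̂*` of `f̂` -/
  fStar : ℝ
  hfStar : IsLUB (Set.range fun p : H × ℝ => f p.1 p.2) fStar
  /-- the Lipschitz constant of the gradient -/
  L : ℝ
  L_pos : 0 < L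
  hdiff : Differentiable ℝ fun p : H × ℝ => f p.1 p.2
  /-- `L`-Lipschitz continuity of the full gradient of `f̂` in the ℓ² product
  structure, written blockwise via the partial gradients. -/
  hlip : ∀ (θ₁ θ₂ : H) (y₁ y₂ : ℝ),
    ‖gradient (fun a => f a y₁) θ₁ - gradient (fun a => f a y₂) θ₂‖ ^ 2
        + (deriv (f θ₁) y₁ - deriv (f θ₂) y₂) ^ 2
      ≤ L ^ 2 * (‖θ₁ - θ₂‖ ^ 2 + (y₁ - y₂) ^ 2)
  /-- the `θ`-iterates -/
  θ : ℕ → Ω → H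
  /-- the `y`-iterates -/
  y : ℕ → Ω → ℝ
  /-- deterministic stepsizes for `θ` -/
  βθ : ℕ → ℝ
  /-- deterministic stepsizes for `y` -/
  βy : ℕ → ℝ
  βθ_pos : ∀ t, 0 < βθ t
  βy_pos : ∀ t, 0 < βy t
  /-- the stochastic estimate `g̃^y_t` -/
  gty : ℕ → Ω → ℝ
  /-- the stochastic estimate `g̃^θ_t` -/
  gtθ : ℕ → Ω → H
  /-- the deterministic initial point `x₁ = (θ₁, y₁)` -/
  x1 : H × ℝ
  hx1 : ∀ ω, θ 1 ω = x1.1 ∧ y 1 ω = x1.2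
  update_y : ∀ t, 1 ≤ t → ∀ ω, y (t + 1) ω = y t ω + βy t * gty t ω
  update_θ : ∀ t, 1 ≤ t → ∀ ω, θ (t + 1) ω = θ t ω + βθ t • gtθ t ω
  meas_x : ∀ t, 1 ≤ t → StronglyMeasurable[F (t - 1)] fun ω => (θ t ω, y t ω)
  meas_gty : ∀ t, 1 ≤ t → StronglyMeasurable[F t] (gty t)
  meas_gtθ : ∀ t, 1 ≤ t → StronglyMeasurable[F t] (gtθ t)
  /-- the bound `ρ` of Assumption (A1) -/
  ρ : ℝ
  ρ_pos : 0 < ρ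
  /-- Assumption (A1): `E[‖x_t‖²] ≤ ρ²`. -/
  hA1 : ∀ t, 1 ≤ t → ∫ ω, (‖θ t ω‖ ^ 2 + (y t ω) ^ 2) ∂μ ≤ ρ ^ 2
  /-- the variance bound `σ` of Assumption (A2) -/
  σ : ℝ
  /-- the bias constant `A` of Assumption (A2) -/
  A : ℝ
  σ_nonneg : 0 ≤ σ
  A_nonneg : 0 ≤ A
  /-- (A2): `E[(Δ^y_t)²] ≤ σ²`. -/
  hA2y_var : ∀ t, 1 ≤ t →
    ∫ ω, (gty t ω - deriv (f (θ t ω)) (y t ω)) ^ 2 ∂μ ≤ σ ^ 2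
  /-- (A2): `E[‖Δ^θ_t‖²] ≤ σ²`. -/
  hA2θ_var : ∀ t, 1 ≤ t →
    ∫ ω, ‖gtθ t ω - gradient (fun a => f a (y (t + 1) ω)) (θ t ω)‖ ^ 2 ∂μ ≤ σ ^ 2
  /-- (A2): `E[Δ^y_t | F_{t-1}] = 0` a.s. -/
  hA2y_unbiased : ∀ t, 1 ≤ t →
    μ[(fun ω => gty t ω - deriv (f (θ t ω)) (y t ω)) | F (t - 1)] =ᵐ[μ] 0
  /-- (A2): `‖E[Δ^θ_t | F_{t-1}]‖ ≤ A · β_t^max` a.s. -/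
  hA2θ_bias : ∀ t, 1 ≤ t → ∀ᵐ ω ∂μ,
    ‖(μ[(fun ω' => gtθ t ω' - gradient (fun a => f a (y (t + 1) ω')) (θ t ω')) |
        F (t - 1)]) ω‖ ≤ A * max (βy t) (βθ t)
  -- integrability of the various expectations appearing in the statements
  int_f : ∀ t, 1 ≤ t → Integrable (fun ω => f (θ t ω) (y t ω)) μ
  int_x_sq : ∀ t, 1 ≤ t → Integrable (fun ω => ‖θ t ω‖ ^ 2 + (y t ω) ^ 2) μ
  int_gy_sq : ∀ t, 1 ≤ t →
    Integrable (fun ω => (deriv (f (θ t ω)) (y t ω)) ^ 2) μ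
  int_gθ_sq : ∀ t, 1 ≤ t →
    Integrable (fun ω => ‖gradient (fun a => f a (y (t + 1) ω)) (θ t ω)‖ ^ 2) μ
  int_Δy : ∀ t, 1 ≤ t →
    Integrable (fun ω => gty t ω - deriv (f (θ t ω)) (y t ω)) μ
  int_Δθ : ∀ t, 1 ≤ t →
    Integrable (fun ω => gtθ t ω - gradient (fun a => f a (y (t + 1) ω)) (θ t ω)) μ
  int_Δy_sq : ∀ t, 1 ≤ t →
    Integrable (fun ω => (gty t ω - deriv (f (θ t ω)) (y t ω)) ^ 2) μ
  int_Δθ_sq : ∀ t, 1 ≤ t →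
    Integrable (fun ω =>
      ‖gtθ t ω - gradient (fun a => f a (y (t + 1) ω)) (θ t ω)‖ ^ 2) μ
  int_fullgrad : ∀ t, 1 ≤ t →
    Integrable (fun ω => Real.sqrt (‖gradient (fun a => f a (y t ω)) (θ t ω)‖ ^ 2
      + (deriv (f (θ t ω)) (y t ω)) ^ 2)) μ
  int_fullgrad_sq : ∀ t, 1 ≤ t →
    Integrable (fun ω => ‖gradient (fun a => f a (y t ω)) (θ t ω)‖ ^ 2
      + (deriv (f (θ t ω)) (y t ω)) ^ 2) μ
  int_gθ_partial : ∀ t, 1 ≤ t →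
    Integrable (fun ω => ‖gradient (fun a => f a (y t ω)) (θ t ω)‖) μ
  int_gθ_norm : ∀ t, 1 ≤ t →
    Integrable (fun ω => ‖gradient (fun a => f a (y (t + 1) ω)) (θ t ω)‖) μ

namespace BCA

variable {H : Type} [NormedAddCommGroup H] [InnerProductSpace ℝ H]
  [FiniteDimensional ℝ H] {Ω : Type} [MeasurableSpace Ω]

/-- the exact block gradient `g^y_t = ∂_y f̂(θ_t, y_t)` -/
def gy (S : BCA H Ω) (t : ℕ) (ω : Ω) : ℝ := deriv (S.f (S.θ t ω)) (S.y t ω)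

/-- the exact block gradient `g^θ_t = ∇_θ f̂(θ_t, y_{t+1})` -/
def gθ (S : BCA H Ω) (t : ℕ) (ω : Ω) : H :=
  gradient (fun a => S.f a (S.y (t + 1) ω)) (S.θ t ω)

/-- `β_t^max` -/
def βmax (S : BCA H Ω) (t : ℕ) : ℝ := max (S.βy t) (S.βθ t)

/-- `β_t^min` -/
def βmin (S : BCA H Ω) (t : ℕ) : ℝ := min (S.βy t) (S.βθ t)

/-- `M_ρ = √(2L²ρ² + 2·max{‖∇_θ f̂(0)‖², ‖∇_y f̂(0)‖²})` -/
def Mρ (S : BCA H Ω) : ℝ :=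
  Real.sqrt (2 * S.L ^ 2 * S.ρ ^ 2
    + 2 * max (‖gradient (fun a => S.f a 0) 0‖ ^ 2) ((deriv (S.f 0) 0) ^ 2))

/-- the squared norm of the full gradient `‖∇f̂(x_t)‖²`
(for the ℓ² structure on `H × ℝ`), expressed blockwise. -/
def fullGradSq (S : BCA H Ω) (t : ℕ) (ω : Ω) : ℝ :=
  ‖gradient (fun a => S.f a (S.y t ω)) (S.θ t ω)‖ ^ 2
    + (deriv (S.f (S.θ t ω)) (S.y t ω)) ^ 2

end BCA

end

open MeasureTheory
/-!
Since `y_{t+1} - y_t = β_t^y g̃_t^y`, Lipschitz continuity of the gradient gives pointwise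
`‖∇_θ f̂(θ_t, y_t)‖ ≤ ‖g_t^θ‖ + L β_t^y |g̃_t^y|`, so it remains to bound `E|g̃_t^y|` by
`√(E[(g̃_t^y)²])`. Writing `g̃_t^y = g_t^y + Δ_t^y`, the cross term `E[g_t^y Δ_t^y]` vanishes
because `g_t^y` is `F_{t-1}`-measurable and `E[Δ_t^y | F_{t-1}] = 0`; hence
`E[(g̃_t^y)²] = E[(g_t^y)²] + E[(Δ_t^y)²] ≤ M_ρ² + σ²`, the first bound coming from
`(g_t^y)² ≤ 2L²‖x_t‖² + 2 (∂_y f̂(0))²` and (A1).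
-/

open ProbabilityTheory

section Moments

variable {Ω : Type*} {m m₀ : MeasurableSpace Ω} {μ : Measure Ω}

theorem integral_abs_le_sqrt_integral_sq [IsProbabilityMeasure μ] {u : Ω → ℝ}
    (hu : MemLp u 2 μ) : ∫ ω, |u ω| ∂μ ≤ √(∫ ω, u ω ^ 2 ∂μ) := by
  have hvar := variance_eq_sub hu.abs
  simp only [Pi.pow_apply, Pi.abs_apply, sq_abs] at hvar
  rw [Real.le_sqrt (integral_nonneg fun _ => abs_nonneg _) (integral_nonneg fun _ => sq_nonneg _)]
  linarith [variance_nonneg |u| μ]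

theorem integral_mul_eq_zero_of_condExp_eq_zero (hm : m ≤ m₀) [SigmaFinite (μ.trim hm)]
    {g Δ : Ω → ℝ} (hg : StronglyMeasurable[m] g) (hgΔ : Integrable (g * Δ) μ)
    (hΔ : Integrable Δ μ) (hΔ_condExp : μ[Δ | m] =ᵐ[μ] 0) :
    ∫ ω, g ω * Δ ω ∂μ = 0 := by
  have hcond : μ[g * Δ | m] =ᵐ[μ] 0 := by
    filter_upwards [condExp_mul_of_stronglyMeasurable_left hg hgΔ hΔ, hΔ_condExp] with ω h h0
    simp [h, h0]
  change ∫ ω, (g * Δ) ω ∂μ = 0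
  rw [← integral_condExp hm, integral_congr_ae hcond]
  simp

theorem integral_sq_add_of_condExp_eq_zero [IsFiniteMeasure μ] (hm : m ≤ m₀) {g Δ : Ω → ℝ}
    (hg_meas : StronglyMeasurable[m] g) (hg : MemLp g 2 μ) (hΔ : MemLp Δ 2 μ)
    (hΔ_condExp : μ[Δ | m] =ᵐ[μ] 0) :
    ∫ ω, (g ω + Δ ω) ^ 2 ∂μ = ∫ ω, g ω ^ 2 ∂μ + ∫ ω, Δ ω ^ 2 ∂μ := by
  have hgΔ : Integrable (g * Δ) μ := hg.integrable_mul hΔ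
  have hcross := integral_mul_eq_zero_of_condExp_eq_zero hm hg_meas hgΔ
    (hΔ.integrable one_le_two) hΔ_condExp
  have hg2 := hg.integrable_sq
  have hgΔ2 : Integrable (fun ω => 2 * (g ω * Δ ω)) μ := hgΔ.const_mul 2
  calc ∫ ω, (g ω + Δ ω) ^ 2 ∂μ = ∫ ω, (g ω ^ 2 + 2 * (g ω * Δ ω) + Δ ω ^ 2) ∂μ := by
        congr 1; ext ω; ring
    _ = ∫ ω, g ω ^ 2 ∂μ + 2 * ∫ ω, g ω * Δ ω ∂μ + ∫ ω, Δ ω ^ 2 ∂μ := by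
        rw [integral_add (f := fun ω => g ω ^ 2 + 2 * (g ω * Δ ω)) (hg2.add hgΔ2)
          hΔ.integrable_sq, integral_add hg2 hgΔ2, integral_const_mul]
    _ = ∫ ω, g ω ^ 2 ∂μ + ∫ ω, Δ ω ^ 2 ∂μ := by rw [hcross]; ring

end Moments

namespace BCA

variable {H : Type} [NormedAddCommGroup H] [InnerProductSpace ℝ H] [FiniteDimensional ℝ H]
  {Ω : Type} [MeasurableSpace Ω] (S : BCA H Ω)

attribute [local instance] BCA.prob

theorem lipschitzWith_deriv_y :
    LipschitzWith (2 * S.L).toNNReal fun p : H × ℝ => deriv (S.f p.1) p.2 := by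
  refine LipschitzWith.of_dist_le_mul fun p q => ?_
  have hlip := S.hlip p.1 q.1 p.2 q.2
  have h₁ : ‖p.1 - q.1‖ ≤ dist p q := by rw [dist_eq_norm]; exact norm_fst_le (p - q)
  have h₂ : |p.2 - q.2| ≤ dist p q := by rw [dist_eq_norm]; exact norm_snd_le (p - q)
  have hL := S.L_pos
  rw [Real.dist_eq, Real.coe_toNNReal _ (by positivity)]
  refine abs_le_of_sq_le_sq ?_ (by positivity)
  nlinarith [sq_nonneg ‖gradient (fun a => S.f a p.2) p.1 - gradient (fun a => S.f a q.2) q.1‖,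
    norm_nonneg (p.1 - q.1), abs_nonneg (p.2 - q.2), sq_abs (p.2 - q.2),
    mul_le_mul h₁ h₁ (norm_nonneg _) dist_nonneg, mul_le_mul h₂ h₂ (abs_nonneg _) dist_nonneg]

theorem sq_deriv_y_le (θ : H) (y : ℝ) :
    deriv (S.f θ) y ^ 2 ≤ 2 * S.L ^ 2 * (‖θ‖ ^ 2 + y ^ 2) + 2 * deriv (S.f 0) 0 ^ 2 := by
  have hlip := S.hlip θ 0 y 0
  simp only [sub_zero] at hlip
  nlinarith [sq_nonneg ‖gradient (fun a => S.f a y) θ - gradient (fun a => S.f a 0) 0‖,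
    sq_nonneg (deriv (S.f θ) y - 2 * deriv (S.f 0) 0)]

theorem norm_gradient_sub_le (θ : H) (y y' : ℝ) :
    ‖gradient (fun a => S.f a y) θ - gradient (fun a => S.f a y') θ‖ ≤ S.L * |y - y'| := by
  have hlip := S.hlip θ θ y y'
  simp only [sub_self, norm_zero] at hlip
  have hL := S.L_pos
  refine (pow_le_pow_iff_left₀ (norm_nonneg _) (by positivity) two_ne_zero).1 ?_
  nlinarith [sq_nonneg (deriv (S.f θ) y - deriv (S.f θ) y'), sq_abs (y - y')]

theorem sq_Mρ : S.Mρ ^ 2 = 2 * S.L ^ 2 * S.ρ ^ 2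
    + 2 * max (‖gradient (fun a => S.f a 0) 0‖ ^ 2) (deriv (S.f 0) 0 ^ 2) :=
  Real.sq_sqrt (by positivity)

variable {t : ℕ}

theorem stronglyMeasurable_gy (ht : 1 ≤ t) : StronglyMeasurable[S.F (t - 1)] (S.gy t) :=
  S.lipschitzWith_deriv_y.continuous.comp_stronglyMeasurable (S.meas_x t ht)

theorem memLp_gy (ht : 1 ≤ t) : MemLp (S.gy t) 2 S.μ :=
  (memLp_two_iff_integrable_sq ((S.stronglyMeasurable_gy ht).mono
    (S.F_le _)).aestronglyMeasurable).2 (S.int_gy_sq t ht)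

theorem memLp_gty_sub_gy (ht : 1 ≤ t) : MemLp (fun ω => S.gty t ω - S.gy t ω) 2 S.μ :=
  (memLp_two_iff_integrable_sq (S.int_Δy t ht).aestronglyMeasurable).2 (S.int_Δy_sq t ht)

theorem memLp_gty (ht : 1 ≤ t) : MemLp (S.gty t) 2 S.μ := by
  convert (S.memLp_gy ht).add (S.memLp_gty_sub_gy ht) using 1
  ext ω
  simp

theorem integral_sq_gy_le (ht : 1 ≤ t) : ∫ ω, S.gy t ω ^ 2 ∂S.μ ≤ S.Mρ ^ 2 := by
  set c := max (‖gradient (fun a => S.f a 0) 0‖ ^ 2) (deriv (S.f 0) 0 ^ 2)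
  have hpoint : ∀ ω, S.gy t ω ^ 2 ≤ 2 * S.L ^ 2 * (‖S.θ t ω‖ ^ 2 + S.y t ω ^ 2) + 2 * c :=
    fun ω => (S.sq_deriv_y_le _ _).trans (by gcongr; exact le_max_right _ _)
  calc ∫ ω, S.gy t ω ^ 2 ∂S.μ
      ≤ ∫ ω, (2 * S.L ^ 2 * (‖S.θ t ω‖ ^ 2 + S.y t ω ^ 2) + 2 * c) ∂S.μ :=
        integral_mono (S.int_gy_sq t ht) (((S.int_x_sq t ht).const_mul _).add
          (integrable_const _)) hpoint
    _ = 2 * S.L ^ 2 * ∫ ω, (‖S.θ t ω‖ ^ 2 + S.y t ω ^ 2) ∂S.μ + 2 * c := by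
        rw [integral_add ((S.int_x_sq t ht).const_mul _) (integrable_const _),
          integral_const_mul, integral_const, probReal_univ, one_smul]
    _ ≤ S.Mρ ^ 2 := by
        rw [S.sq_Mρ]
        gcongr
        exact S.hA1 t ht

theorem integral_sq_gty_le (ht : 1 ≤ t) :
    ∫ ω, S.gty t ω ^ 2 ∂S.μ ≤ S.Mρ ^ 2 + S.σ ^ 2 := by
  have hsplit := integral_sq_add_of_condExp_eq_zero (S.F_le (t - 1)) (S.stronglyMeasurable_gy ht)
    (S.memLp_gy ht) (S.memLp_gty_sub_gy ht) (S.hA2y_unbiased t ht)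
  simp only [add_sub_cancel] at hsplit
  rw [hsplit]
  exact add_le_add (S.integral_sq_gy_le ht) (S.hA2y_var t ht)

theorem integrable_gty (ht : 1 ≤ t) : Integrable (S.gty t) S.μ :=
  (S.memLp_gty ht).integrable one_le_two

theorem integral_abs_gty_le (ht : 1 ≤ t) :
    ∫ ω, |S.gty t ω| ∂S.μ ≤ √(S.Mρ ^ 2 + S.σ ^ 2) :=
  (integral_abs_le_sqrt_integral_sq (S.memLp_gty ht)).trans
    (Real.sqrt_le_sqrt (S.integral_sq_gty_le ht))

theorem norm_gradient_θ_le (ht : 1 ≤ t) (ω : Ω) :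
    ‖gradient (fun a => S.f a (S.y t ω)) (S.θ t ω)‖
      ≤ S.L * S.βy t * |S.gty t ω| + ‖S.gθ t ω‖ := by
  have hstep : |S.y t ω - S.y (t + 1) ω| = S.βy t * |S.gty t ω| := by
    rw [S.update_y t ht, sub_add_cancel_left, abs_neg, abs_mul, abs_of_pos (S.βy_pos t)]
  calc ‖gradient (fun a => S.f a (S.y t ω)) (S.θ t ω)‖
      ≤ ‖S.gθ t ω‖ + ‖gradient (fun a => S.f a (S.y t ω)) (S.θ t ω) - S.gθ t ω‖ :=
        norm_le_norm_add_norm_sub' _ _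
    _ ≤ ‖S.gθ t ω‖ + S.L * |S.y t ω - S.y (t + 1) ω| := by
        gcongr; exact S.norm_gradient_sub_le _ _ _
    _ = S.L * S.βy t * |S.gty t ω| + ‖S.gθ t ω‖ := by rw [hstep]; ring

end BCA

/-- **Control of the full θ-partial gradient by the shifted block
gradient.** For every `t ≥ 1`,
`E[‖∇_θ f̂(θ_t, y_t)‖] ≤ L·β_t^max·√(M_ρ² + σ²) + E[‖g_t^θ‖]`. -/
theorem BCA.theta_partial_grad_bound {H : Type} [NormedAddCommGroup H]
    [InnerProductSpace ℝ H] [FiniteDimensional ℝ H]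
    {Ω : Type} [MeasurableSpace Ω] (S : BCA H Ω) (t : ℕ) (ht : 1 ≤ t) :
    ∫ ω, ‖gradient (fun a => S.f a (S.y t ω)) (S.θ t ω)‖ ∂S.μ
      ≤ S.L * S.βmax t * Real.sqrt (S.Mρ ^ 2 + S.σ ^ 2)
        + ∫ ω, ‖S.gθ t ω‖ ∂S.μ := by
  have hgty := S.integrable_gty ht
  have hgθ : Integrable (fun ω => ‖S.gθ t ω‖) S.μ := S.int_gθ_norm t ht
  calc ∫ ω, ‖gradient (fun a => S.f a (S.y t ω)) (S.θ t ω)‖ ∂S.μ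
      ≤ ∫ ω, (S.L * S.βy t * |S.gty t ω| + ‖S.gθ t ω‖) ∂S.μ :=
        integral_mono (S.int_gθ_partial t ht) ((hgty.abs.const_mul _).add hgθ)
          (S.norm_gradient_θ_le ht)
    _ = S.L * S.βy t * ∫ ω, |S.gty t ω| ∂S.μ + ∫ ω, ‖S.gθ t ω‖ ∂S.μ := by
        rw [integral_add (hgty.abs.const_mul _) hgθ, integral_const_mul]
    _ ≤ S.L * S.βmax t * √(S.Mρ ^ 2 + S.σ ^ 2) + ∫ ω, ‖S.gθ t ω‖ ∂S.μ := by
        have habs := S.integral_abs_gty_le ht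
        have hL := S.L_pos.le
        have hβ : S.βy t ≤ S.βmax t := le_max_left _ _
        have hLβ : 0 ≤ S.L * S.βmax t := mul_nonneg hL ((S.βy_pos t).le.trans hβ)
        gcongr
end
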